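/- arXiv:1401.0364 — 4 statements merged into one kernel-verified Lean document; each statement's English description precedes it below -/
import Mathlib

section
/- Let B be an n×n matrix with strictly positive entries, Perron eigenvalue β > 0 and right Perron eigenvector μ̄ normalized to be a probability vector. Define J = (1/β)(B - βI - μ̄𝟙ᵀB). Then the eigenvalues of J are exactly {λ_B/β - 1 : λ_B a non-Perron eigenvalue of B} together with the eigenvalue -1 (with eigenvector μ̄). -/
/-!
Write `J = β⁻¹ (D - β)` with the Wielandt deflation `D = B - μ̄ wᵀ`, `w = Bᵀ𝟙`, so that
`w ⬝ μ̄ = β` and `D μ̄ = 0`. A left eigenvector of `B` for `z ≠ β` is orthogonal to `μ̄`, hence a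
left eigenvector of `D`; a left eigenvector of `D` for `z ≠ 0` is orthogonal to `μ̄ ∈ ker D`, hence
one of `B`. So `σ(D) = {0} ∪ (σ(B) \ {β})` as soon as `β ∉ σ(D)`. For that, pair `D v = β v` with a
left Perron vector `ν` with `ν ⬝ μ̄ > 0` (the entrywise modulus of any left eigenvector): this gives
`w ⬝ v = 0`, so `B v = β v`, `v` is a multiple of `μ̄`, and `w ⬝ v = 0` forces `v = 0`.
-/

open Matrix Complex

theorem spectrum_inv_smul_sub_algebraMap {K A : Type*} [Field K] [Ring A] [Algebra K A]
    (a : A) {c : K} (hc : c ≠ 0) :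
    spectrum K (c⁻¹ • (a - algebraMap K A c)) = (fun z => z / c - 1) '' spectrum K a := by
  rw [← Units.smul_mk0 (inv_ne_zero hc), spectrum.unit_smul_eq_smul, ← spectrum.sub_singleton_eq,
    Set.sub_singleton, ← Set.image_smul, Set.image_image]
  refine Set.image_congr fun z _ => ?_
  simp [Units.smul_def, div_eq_inv_mul, mul_sub, hc]

namespace Matrix

variable {ι : Type*} [Fintype ι]

theorem sub_vecMulVec_mulVec_self {R : Type*} [CommRing R] {A : Matrix ι ι R} {u w : ι → R}
    {β : R} (hu : A *ᵥ u = β • u) (hw : w ⬝ᵥ u = β) : (A - vecMulVec u w) *ᵥ u = 0 := by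
  rw [sub_mulVec, vecMulVec_mulVec, op_smul_eq_smul, hu, hw, sub_self]

section Field

variable {K : Type*} [Field K] [DecidableEq ι]

theorem mem_spectrum_iff_exists_mulVec_eq_smul {A : Matrix ι ι K} {z : K} :
    z ∈ spectrum K A ↔ ∃ v ≠ 0, A *ᵥ v = z • v := by
  rw [← spectrum_toLin', ← Module.End.hasEigenvalue_iff_mem_spectrum,
    Module.End.hasEigenvalue_iff, Submodule.ne_bot_iff]
  simp only [Module.End.mem_eigenspace_iff, toLin'_apply]
  exact ⟨fun ⟨v, hv, hv0⟩ => ⟨v, hv0, hv⟩, fun ⟨v, hv0, hv⟩ => ⟨v, hv, hv0⟩⟩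

theorem spectrum_transpose (A : Matrix ι ι K) : spectrum K Aᵀ = spectrum K A := by
  ext z
  simp only [spectrum.mem_iff, isUnit_iff_isUnit_det, Algebra.algebraMap_eq_smul_one]
  rw [← det_transpose, transpose_sub, transpose_smul, transpose_one, transpose_transpose]

theorem mem_spectrum_iff_exists_vecMul_eq_smul {A : Matrix ι ι K} {z : K} :
    z ∈ spectrum K A ↔ ∃ v ≠ 0, v ᵥ* A = z • v := by
  simp only [← spectrum_transpose A, mem_spectrum_iff_exists_mulVec_eq_smul, mulVec_transpose]

variable {A : Matrix ι ι K} {u w : ι → K} {β z : K}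

theorem mem_spectrum_of_mem_spectrum_sub_vecMulVec (hu : A *ᵥ u = β • u) (hw : w ⬝ᵥ u = β)
    (hz : z ≠ 0) (h : z ∈ spectrum K (A - vecMulVec u w)) : z ∈ spectrum K A := by
  obtain ⟨x, hx0, hx⟩ := mem_spectrum_iff_exists_vecMul_eq_smul.mp h
  have hxu : x ⬝ᵥ u = 0 := by
    have := congrArg (· ⬝ᵥ u) hx
    simp only [← dotProduct_mulVec, sub_vecMulVec_mulVec_self hu hw, dotProduct_zero,
      smul_dotProduct, smul_eq_mul, zero_eq_mul] at this
    exact this.resolve_left hz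
  refine mem_spectrum_iff_exists_vecMul_eq_smul.mpr ⟨x, hx0, ?_⟩
  rwa [vecMul_sub, vecMul_vecMulVec, hxu, zero_smul, sub_zero] at hx

theorem mem_spectrum_sub_vecMulVec_of_mem_spectrum (hu : A *ᵥ u = β • u) (hz : z ≠ β)
    (h : z ∈ spectrum K A) : z ∈ spectrum K (A - vecMulVec u w) := by
  obtain ⟨x, hx0, hx⟩ := mem_spectrum_iff_exists_vecMul_eq_smul.mp h
  have hxu : x ⬝ᵥ u = 0 := by
    have := dotProduct_mulVec x A u
    rw [hu, hx, dotProduct_smul, smul_dotProduct, smul_eq_mul, smul_eq_mul] at this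
    exact (mul_eq_mul_right_iff.mp this.symm).resolve_left hz
  refine mem_spectrum_iff_exists_vecMul_eq_smul.mpr ⟨x, hx0, ?_⟩
  rw [vecMul_sub, vecMul_vecMulVec, hxu, zero_smul, sub_zero, hx]

theorem notMem_spectrum_sub_vecMulVec (hw : w ⬝ᵥ u = β) (hβ : β ≠ 0) {ν : ι → K}
    (hν : ν ᵥ* A = β • ν) (hνu : ν ⬝ᵥ u ≠ 0)
    (hsimple : ∀ v, A *ᵥ v = β • v → ∃ c : K, v = c • u) :
    β ∉ spectrum K (A - vecMulVec u w) := by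
  intro h
  obtain ⟨v, hv0, hv⟩ := mem_spectrum_iff_exists_mulVec_eq_smul.mp h
  rw [sub_mulVec, vecMulVec_mulVec, op_smul_eq_smul] at hv
  have hwv : w ⬝ᵥ v = 0 := by
    have := congrArg (ν ⬝ᵥ ·) hv
    simp only [dotProduct_sub, dotProduct_mulVec, hν, dotProduct_smul, smul_dotProduct,
      smul_eq_mul, sub_eq_self, mul_eq_zero] at this
    exact this.resolve_right hνu
  rw [hwv, zero_smul, sub_zero] at hv
  obtain ⟨c, rfl⟩ := hsimple v hv
  rw [dotProduct_smul, hw, smul_eq_mul, mul_eq_zero] at hwv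
  exact hv0 (by rw [hwv.resolve_right hβ, zero_smul])

theorem spectrum_sub_vecMulVec (hu : A *ᵥ u = β • u) (hw : w ⬝ᵥ u = β) (hu0 : u ≠ 0)
    (hβ : β ∉ spectrum K (A - vecMulVec u w)) :
    spectrum K (A - vecMulVec u w) = insert 0 (spectrum K A \ {β}) := by
  ext z
  rcases eq_or_ne z 0 with rfl | hz
  · simpa using mem_spectrum_iff_exists_mulVec_eq_smul.mpr
      ⟨u, hu0, by rw [sub_vecMulVec_mulVec_self hu hw, zero_smul]⟩
  refine ⟨fun h => .inr ⟨mem_spectrum_of_mem_spectrum_sub_vecMulVec hu hw hz h, ?_⟩, ?_⟩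
  · rintro rfl
    exact hβ h
  · rintro (rfl | ⟨h, hzβ⟩)
    · exact absurd rfl hz
    · exact mem_spectrum_sub_vecMulVec_of_mem_spectrum hu hzβ h

end Field

theorem exists_vecMul_eq_smul_dotProduct_pos [DecidableEq ι] {B : Matrix ι ι ℝ}
    (hB : ∀ i j, 0 ≤ B i j) {β : ℝ} (hβ : 0 ≤ β) (hβB : β ∈ spectrum ℝ B) {μ : ι → ℝ}
    (hμ : ∀ i, 0 < μ i) (hBμ : B *ᵥ μ = β • μ) :
    ∃ ν : ι → ℝ, ν ᵥ* B = β • ν ∧ 0 < ν ⬝ᵥ μ := by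
  obtain ⟨v, hv0, hv⟩ := mem_spectrum_iff_exists_vecMul_eq_smul.mp hβB
  set ν : ι → ℝ := fun i => |v i|
  have hle : ∀ j, β * ν j ≤ (ν ᵥ* B) j := fun j =>
    calc β * ν j = |(v ᵥ* B) j| := by simp [hv, ν, abs_mul, abs_of_nonneg hβ]
      _ ≤ ∑ i, |v i * B i j| := Finset.abs_sum_le_sum_abs _ _
      _ = (ν ᵥ* B) j := by simp [vecMul, dotProduct, ν, abs_mul, abs_of_nonneg (hB _ j)]
  -- the nonnegative vector `ν ᵥ* B - β • ν` is orthogonal to the positive vector `μ`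
  have hgap : ∑ j, ((ν ᵥ* B) j - β * ν j) * μ j = 0 := by
    have := dotProduct_mulVec ν B μ
    rw [hBμ, dotProduct_smul, smul_eq_mul] at this
    simp only [sub_mul, Finset.sum_sub_distrib, mul_assoc, ← Finset.mul_sum]
    simpa [dotProduct, sub_eq_zero] using this.symm
  have heq : ∀ j, (ν ᵥ* B) j = β * ν j := fun j => by
    have := (Finset.sum_eq_zero_iff_of_nonneg fun j _ =>
      mul_nonneg (sub_nonneg.mpr (hle j)) (hμ j).le).mp hgap j (Finset.mem_univ j)
    simpa [(hμ j).ne', sub_eq_zero] using this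
  refine ⟨ν, funext fun j => by simp [heq j], ?_⟩
  obtain ⟨i, hi⟩ := Function.ne_iff.mp hv0
  exact Finset.sum_pos' (fun j _ => mul_nonneg (abs_nonneg _) (hμ j).le)
    ⟨i, Finset.mem_univ i, mul_pos (abs_pos.mpr hi) (hμ i)⟩

theorem re_map_ofReal_mulVec (B : Matrix ι ι ℝ) (v : ι → ℂ) (i : ι) :
    ((B.map ofReal *ᵥ v) i).re = (B *ᵥ fun j => (v j).re) i := by
  simp [mulVec, dotProduct, re_sum]

theorem im_map_ofReal_mulVec (B : Matrix ι ι ℝ) (v : ι → ℂ) (i : ι) :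
    ((B.map ofReal *ᵥ v) i).im = (B *ᵥ fun j => (v j).im) i := by
  simp [mulVec, dotProduct, im_sum]

theorem exists_eq_smul_of_map_ofReal_mulVec_eq_smul {B : Matrix ι ι ℝ} {β : ℝ} {μ : ι → ℝ}
    (hsimple : ∀ v, B *ᵥ v = β • v → ∃ c : ℝ, v = c • μ) {v : ι → ℂ}
    (hv : B.map ofReal *ᵥ v = (β : ℂ) • v) : ∃ c : ℂ, v = c • (ofReal ∘ μ) := by
  obtain ⟨a, ha⟩ := hsimple (fun j => (v j).re) <| funext fun i => by
    simpa using (re_map_ofReal_mulVec B v i).symm.trans (congrArg re (congrFun hv i))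
  obtain ⟨b, hb⟩ := hsimple (fun j => (v j).im) <| funext fun i => by
    simpa using (im_map_ofReal_mulVec B v i).symm.trans (congrArg im (congrFun hv i))
  refine ⟨⟨a, b⟩, funext fun i => Complex.ext ?_ ?_⟩
  · simpa using congrFun ha i
  · simpa using congrFun hb i

theorem spectrum_map_ofReal_sub_vecMulVec [DecidableEq ι] {B : Matrix ι ι ℝ}
    (hB : ∀ i j, 0 ≤ B i j) {β : ℝ} (hβ : 0 < β) (hβB : β ∈ spectrum ℝ B) {μ w : ι → ℝ}
    (hμ : ∀ i, 0 < μ i) (hBμ : B *ᵥ μ = β • μ)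
    (hsimple : ∀ v, B *ᵥ v = β • v → ∃ c : ℝ, v = c • μ) (hw : w ⬝ᵥ μ = β) :
    spectrum ℂ ((B - vecMulVec μ w).map ofReal) =
      insert 0 (spectrum ℂ (B.map ofReal) \ {(β : ℂ)}) := by
  obtain ⟨ν, hνB, hνμ⟩ := exists_vecMul_eq_smul_dotProduct_pos hB hβ.le hβB hμ hBμ
  have hcoe : ⇑ofRealHom = ofReal := rfl
  have hBμc : B.map ofReal *ᵥ (ofReal ∘ μ) = (β : ℂ) • (ofReal ∘ μ) := by
    ext i
    simpa [hBμ, hcoe] using (RingHom.map_mulVec ofRealHom B μ i).symm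
  have hwμc : (ofReal ∘ w) ⬝ᵥ (ofReal ∘ μ) = β := by
    simpa [hw, hcoe] using (RingHom.map_dotProduct ofRealHom w μ).symm
  have hνBc : (ofReal ∘ ν) ᵥ* B.map ofReal = (β : ℂ) • (ofReal ∘ ν) := by
    ext i
    simpa [hνB, hcoe] using (RingHom.map_vecMul ofRealHom B ν i).symm
  have hνμc : (ofReal ∘ ν) ⬝ᵥ (ofReal ∘ μ) ≠ 0 := by
    rw [← hcoe, ← RingHom.map_dotProduct, ofRealHom_eq_coe, ofReal_ne_zero]
    exact hνμ.ne'
  have hμ0 : ofReal ∘ μ ≠ 0 := fun h => hνμc (by rw [h, dotProduct_zero])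
  have hmap : (B - vecMulVec μ w).map ofReal =
      B.map ofReal - vecMulVec (ofReal ∘ μ) (ofReal ∘ w) := by
    ext i j
    simp [vecMulVec_apply]
  rw [hmap]
  exact spectrum_sub_vecMulVec hBμc hwμc hμ0 <| notMem_spectrum_sub_vecMulVec hwμc
    (ofReal_ne_zero.mpr hβ.ne') hνBc hνμc fun _ hv =>
      exists_eq_smul_of_map_ofReal_mulVec_eq_smul hsimple hv

end Matrix

theorem J_spectrum_general {n : ℕ} (B : Matrix (Fin n) (Fin n) ℝ)
    (hBpos : ∀ i j, 0 < B i j)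
    (β : ℝ) (hβpos : 0 < β) (hβmem : β ∈ spectrum ℝ B)
    (μbar : Fin n → ℝ) (hμpos : ∀ i, 0 < μbar i) (hμsum : (∑ i, μbar i) = 1)
    (hμeig : B.mulVec μbar = β • μbar)
    (hsimple : ∀ v : Fin n → ℝ, B.mulVec v = β • v → ∃ c : ℝ, v = c • μbar) :
    (spectrum ℂ ((β⁻¹ • (B - β • (1 : Matrix (Fin n) (Fin n) ℝ) -
        Matrix.vecMulVec μbar (fun _ => 1) * B)).map (Complex.ofReal)) =
      {w : ℂ | ∃ z ∈ spectrum ℂ (B.map (Complex.ofReal)),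
          z ≠ (β : ℂ) ∧ w = z / (β : ℂ) - 1} ∪ {-1}) ∧
    (β⁻¹ • (B - β • (1 : Matrix (Fin n) (Fin n) ℝ) -
        Matrix.vecMulVec μbar (fun _ => 1) * B)).mulVec μbar = (-1 : ℝ) • μbar := by
  set w : Fin n → ℝ := (fun _ => 1) ᵥ* B
  have hwμ : w ⬝ᵥ μbar = β := by
    rw [← dotProduct_mulVec, hμeig, dotProduct_smul, smul_eq_mul]
    simp [dotProduct, hμsum]
  rw [vecMulVec_mul, sub_right_comm]
  set D := B - vecMulVec μbar w
  have hmap : (β⁻¹ • (D - β • 1)).map ofReal =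
      (β : ℂ)⁻¹ • (D.map ofReal - algebraMap ℂ _ β) := by
    ext i j
    by_cases h : i = j <;> simp [h, one_apply, algebraMap_matrix_apply]
  refine ⟨?_, ?_⟩
  · rw [hmap, spectrum_inv_smul_sub_algebraMap _ (ofReal_ne_zero.mpr hβpos.ne'),
      spectrum_map_ofReal_sub_vecMulVec (fun i j => (hBpos i j).le) hβpos hβmem hμpos hμeig
        hsimple hwμ, Set.image_insert_eq, Set.union_comm, Set.insert_eq]
    congr 1
    · simp
    · ext z
      simp [eq_comm, and_assoc]
  · rw [smul_mulVec, sub_mulVec, sub_vecMulVec_mulVec_self hμeig hwμ, smul_mulVec, one_mulVec,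
      zero_sub, smul_neg, smul_smul, inv_mul_cancel₀ hβpos.ne', one_smul, neg_one_smul]

/-- the spectrum of `J = (1/β)(B - βI - μ̄𝟙ᵀB)` consists of `-1`
(with eigenvector `μ̄`) together with `λ_B/β - 1` for the non-Perron eigenvalues
`λ_B` of `B`. -/
theorem J_spectrum {n : ℕ} (B : Matrix (Fin n) (Fin n) ℝ)
    (hBpos : ∀ i j, 0 < B i j)
    (β : ℝ) (hβpos : 0 < β) (hβmem : β ∈ spectrum ℝ B)
    (hβmax : ∀ z ∈ spectrum ℂ (B.map (Complex.ofReal)), ‖z‖ ≤ β)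
    (μbar : Fin n → ℝ) (hμpos : ∀ i, 0 < μbar i) (hμsum : (∑ i, μbar i) = 1)
    (hμeig : B.mulVec μbar = β • μbar)
    (hsimple : ∀ v : Fin n → ℝ, B.mulVec v = β • v → ∃ c : ℝ, v = c • μbar) :
    (spectrum ℂ ((β⁻¹ • (B - β • (1 : Matrix (Fin n) (Fin n) ℝ) -
        Matrix.vecMulVec μbar (fun _ => 1) * B)).map (Complex.ofReal)) =
      {w : ℂ | ∃ z ∈ spectrum ℂ (B.map (Complex.ofReal)),
          z ≠ (β : ℂ) ∧ w = z / (β : ℂ) - 1} ∪ {-1}) ∧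
    (β⁻¹ • (B - β • (1 : Matrix (Fin n) (Fin n) ℝ) -
        Matrix.vecMulVec μbar (fun _ => 1) * B)).mulVec μbar = (-1 : ℝ) • μbar :=
  J_spectrum_general B hBpos β hβpos hβmem μbar hμpos hμsum hμeig hsimple
end

section
/- Consider the ODE ν̇(t)ᵀ = ν(t)ᵀA - (ν(t)ᵀA𝟙)ν(t)ᵀ on ℝⁿ, where A is a matrix with nonnegative entries. Any solution ν with ν(0) in the probability simplex satisfies the Duhamel representation ν(t)ᵀ = ν(0)ᵀ exp(At) · exp(-∫₀ᵗ ν(s)ᵀA𝟙 ds), and consequently ν(t) remains in the probability simplex for all t ≥ 0. -/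
/-!
Multiplying by the integrating factor `exp (∫₀ᵗ ν ⬝ᵥ A𝟙)` turns the equation into the linear
equation `μ' = μ A`, whose solutions are `μ t = μ 0 exp (tA)` since `μ t exp (-tA)` has zero
derivative; this is the Duhamel formula. For `A ≥ 0` the series of `exp (tA)`, `t ≥ 0`, has
nonnegative terms, so `ν t ≥ 0`. The mass defect `∑ ν t - 1` solves the scalar equation
`σ' = -(ν ⬝ᵥ A𝟙) σ` with `σ 0 = 0`, so it vanishes identically.
-/

open Matrix NormedSpace

theorem Matrix.exp_apply_nonneg {m : Type*} [Fintype m] [DecidableEq m] {B : Matrix m m ℝ}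
    (hB : ∀ i j, 0 ≤ B i j) (i j : m) : 0 ≤ exp B i j :=
  open scoped Norms.Operator in
  (Pi.hasSum.1 (Pi.hasSum.1 (exp_series_hasSum_exp' (𝕂 := ℝ) B) i) j).nonneg
    fun k => mul_nonneg (by positivity) (pow_apply_nonneg hB k i j)

open scoped Norms.Operator in
theorem HasDerivAt.vecMul {m n : Type*} [Fintype m] [Fintype n] {x : ℝ → m → ℝ}
    {M : ℝ → Matrix m n ℝ} {x' : m → ℝ} {M' : Matrix m n ℝ} {t : ℝ}
    (hx : HasDerivAt x x' t) (hM : HasDerivAt M M' t) :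
    HasDerivAt (fun s => x s ᵥ* M s) (x' ᵥ* M t + x t ᵥ* M') t := by
  refine hasDerivAt_pi.2 fun j => ?_
  have hMj : ∀ i, HasDerivAt (fun s => M s i j) (M' i j) t := fun i =>
    (entryLinearMap ℝ ℝ i j).toContinuousLinearMap.hasFDerivAt.comp_hasDerivAt t hM
  exact (HasDerivAt.fun_sum fun i _ => (hasDerivAt_pi.1 hx i).mul (hMj i)).congr_deriv
    Finset.sum_add_distrib

open scoped Norms.Operator in
theorem eq_vecMul_exp_of_hasDerivAt {m : Type*} [Fintype m] [DecidableEq m]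
    {A : Matrix m m ℝ} {y : ℝ → m → ℝ} (hy : ∀ t, HasDerivAt y (y t ᵥ* A) t) (t : ℝ) :
    y t = y 0 ᵥ* exp (t • A) := by
  have hconst : ∀ s, HasDerivAt (fun s => y s ᵥ* exp (s • -A)) 0 s := fun s =>
    ((hy s).vecMul (hasDerivAt_exp_smul_const' (-A) s)).congr_deriv
      (by rw [vecMul_vecMul, Matrix.neg_mul, vecMul_neg, add_neg_cancel])
  have h := is_const_of_deriv_eq_zero (fun s => (hconst s).differentiableAt)
    (fun s => (hconst s).deriv) t 0
  have hinv : exp (t • -A) * exp (t • A) = 1 := by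
    rw [← Matrix.exp_add_of_commute _ _ (((Commute.refl A).neg_left.smul_left t).smul_right t),
      smul_neg, neg_add_cancel, exp_zero]
  simp only [zero_smul, exp_zero, vecMul_one] at h
  rw [← h, vecMul_vecMul, hinv, vecMul_one]

section IntegratingFactor

variable {E : Type*} [NormedAddCommGroup E] [NormedSpace ℝ E] {c : ℝ → ℝ} {x : ℝ → E}

theorem HasDerivAt.exp_integral_smul (hc : Continuous c) (a : ℝ) {v : E} {t : ℝ}
    (hx : HasDerivAt x (v - c t • x t) t) :
    HasDerivAt (fun s => Real.exp (∫ u in a..s, c u) • x s)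
      (Real.exp (∫ u in a..t, c u) • v) t :=
  ((hc.integral_hasStrictDerivAt a t).hasDerivAt.exp.smul hx).congr_deriv (by
    rw [smul_sub, smul_smul, sub_add_cancel])

theorem eq_exp_neg_integral_smul_of_hasDerivAt (hc : Continuous c)
    (hx : ∀ t, HasDerivAt x (-(c t • x t)) t) (a t : ℝ) :
    x t = Real.exp (-∫ u in a..t, c u) • x a := by
  have hconst : ∀ s, HasDerivAt (fun s => Real.exp (∫ u in a..s, c u) • x s) 0 s := fun s => by
    simpa using HasDerivAt.exp_integral_smul hc a (v := (0 : E)) (by simpa using hx s)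
  have h := is_const_of_deriv_eq_zero (fun s => (hconst s).differentiableAt)
    (fun s => (hconst s).deriv) t a
  simp only [intervalIntegral.integral_same, Real.exp_zero, one_smul] at h
  rw [← h, smul_smul, ← Real.exp_add, neg_add_cancel, Real.exp_zero, one_smul]

end IntegratingFactor

section NormalizedFlow

variable {n : Type*} [Fintype n] {A : Matrix n n ℝ} {ν : ℝ → n → ℝ}

theorem normalizedFlow_sum_eq_one
    (hν : ∀ t, HasDerivAt ν (ν t ᵥ* A - (ν t ⬝ᵥ A *ᵥ 1) • ν t) t) (h0 : ∑ i, ν 0 i = 1)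
    (t : ℝ) : ∑ i, ν t i = 1 := by
  have hc : Continuous fun t => ν t ⬝ᵥ A *ᵥ 1 :=
    (Differentiable.continuous fun t => (hν t).differentiableAt).dotProduct continuous_const
  -- `∑ i, (ν ᵥ* A) i = ν ⬝ᵥ A *ᵥ 1` cancels the source term
  have hdefect : ∀ s, HasDerivAt (fun s => ∑ i, ν s i - 1)
      (-((ν s ⬝ᵥ A *ᵥ 1) • (∑ i, ν s i - 1))) s := fun s =>
    ((HasDerivAt.fun_sum fun i _ => hasDerivAt_pi.1 (hν s) i).sub_const 1).congr_deriv (by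
      simp only [Pi.sub_apply, Pi.smul_apply, smul_eq_mul, Finset.sum_sub_distrib,
        ← Finset.mul_sum, dotProduct_mulVec, ← dotProduct_one]
      ring)
  have h := eq_exp_neg_integral_smul_of_hasDerivAt hc hdefect 0 t
  rw [h0, sub_self, smul_zero] at h
  exact sub_eq_zero.1 h

theorem normalizedFlow_eq_exp_neg_integral_smul_vecMul_exp [DecidableEq n]
    (hν : ∀ t, HasDerivAt ν (ν t ᵥ* A - (ν t ⬝ᵥ A *ᵥ 1) • ν t) t) (t : ℝ) :
    ν t = Real.exp (-∫ s in 0..t, ν s ⬝ᵥ A *ᵥ 1) • (ν 0 ᵥ* exp (t • A)) := by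
  have hc : Continuous fun t => ν t ⬝ᵥ A *ᵥ 1 :=
    (Differentiable.continuous fun t => (hν t).differentiableAt).dotProduct continuous_const
  have hμ := eq_vecMul_exp_of_hasDerivAt
    (y := fun s => Real.exp (∫ u in 0..s, ν u ⬝ᵥ A *ᵥ 1) • ν s) (fun s => by
      simpa only [smul_vecMul] using (hν s).exp_integral_smul hc 0) t
  simp only [intervalIntegral.integral_same, Real.exp_zero, one_smul] at hμ
  rw [← hμ, smul_smul, ← Real.exp_add, neg_add_cancel, Real.exp_zero, one_smul]

end NormalizedFlow

/-- any solution of `ν̇ᵀ = νᵀA - (νᵀA𝟙)νᵀ` starting in the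
probability simplex satisfies the Duhamel representation
`ν(t)ᵀ = ν(0)ᵀ exp(At) exp(-∫₀ᵗ ν(s)ᵀA𝟙 ds)` and remains in the simplex. -/
theorem duhamel_simplex_invariance {n : ℕ} (A : Matrix (Fin n) (Fin n) ℝ)
    (hAnonneg : ∀ i j, 0 ≤ A i j)
    (ν : ℝ → Fin n → ℝ)
    (hode : ∀ t : ℝ, HasDerivAt ν
      ((Aᵀ).mulVec (ν t) - ((ν t) ⬝ᵥ A.mulVec (fun _ => 1)) • (ν t)) t)
    (h0nonneg : ∀ i, 0 ≤ ν 0 i) (h0sum : (∑ i, ν 0 i) = 1) :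
    ∀ t : ℝ, 0 ≤ t →
      (ν t = Real.exp (-(∫ s in (0 : ℝ)..t, (ν s) ⬝ᵥ A.mulVec (fun _ => 1))) •
          Matrix.vecMul (ν 0) (NormedSpace.exp (t • A))) ∧
      (∀ i, 0 ≤ ν t i) ∧ (∑ i, ν t i) = 1 := by
  have hν : ∀ t, HasDerivAt ν (ν t ᵥ* A - (ν t ⬝ᵥ A *ᵥ 1) • ν t) t := fun t => by
    rw [← mulVec_transpose]
    exact hode t
  intro t ht
  have hduhamel := normalizedFlow_eq_exp_neg_integral_smul_vecMul_exp hν t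
  refine ⟨hduhamel, fun i => ?_, normalizedFlow_sum_eq_one hν h0sum t⟩
  rw [hduhamel]
  exact mul_nonneg (Real.exp_pos _).le (dotProduct_nonneg_of_nonneg h0nonneg
    fun j => exp_apply_nonneg (fun k l => mul_nonneg ht (hAnonneg k l)) j i)
end

section
/- Let A = (I-Q)^{-1} where Q is an irreducible substochastic matrix, so A has strictly positive entries with Perron eigenvalue β and left Perron eigenvector μ̄ (a probability vector). Then any solution of ν̇(t)ᵀ = ν(t)ᵀA - (ν(t)ᵀA𝟙)ν(t)ᵀ with ν(0) in the probability simplex converges to μ̄ as t → ∞. -/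
/-!
Since `Q ≥ 0` has spectral radius `< 1`, `A = (1 - Q)⁻¹ = ∑ Qᵏ`, and irreducibility makes every
entry of this series positive. With `r(t) = νᵀA𝟙` and `R' = r`, the vector `e^R ν` solves the
linear equation `w' = Aᵀw` and the mass of `ν` stays `1`, so `ν(t)` is the normalisation of
`exp(tAᵀ) ν(0)`. Rescaled by `e^{-βt}`, this flow fixes `μ̄` and has nonnegative entries, so
`min zᵢ/μ̄ᵢ` can only grow and `max zᵢ/μ̄ᵢ` only shrink; since all entries of the time-one map are
positive, each coordinate gains a fixed fraction of the gap between them per unit of time. Hence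
`z(t) → L μ̄` with `L > 0`, and normalising gives `ν(t) → μ̄`.
-/

open Matrix Filter

def MatIrreducible {n : ℕ} (Q : Matrix (Fin n) (Fin n) ℝ) : Prop :=
  ∀ i j, ∃ k : ℕ, 0 < (Q ^ k) i j

open Topology

theorem summable_norm_pow_of_spectralRadius_lt_one {A : Type*} [NormedRing A]
    [NormedAlgebra ℂ A] [CompleteSpace A] {a : A} (ha : spectralRadius ℂ a < 1) :
    Summable fun k => ‖a ^ k‖ := by
  obtain ⟨c, hρc, hc1⟩ := ENNReal.lt_iff_exists_nnreal_btwn.mp ha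
  refine summable_of_isBigO_nat (summable_geometric_of_lt_one c.2 (by exact_mod_cast hc1))
    (Asymptotics.IsBigO.of_bound 1 ?_)
  filter_upwards [(spectrum.pow_norm_pow_one_div_tendsto_nhds_spectralRadius a).eventually_lt_const
    hρc, eventually_ge_atTop 1] with k hk hk1
  rw [ENNReal.ofReal_lt_iff_lt_toReal (by positivity) ENNReal.coe_ne_top, ENNReal.coe_toReal,
    one_div] at hk
  have := (Real.rpow_inv_lt_iff_of_pos (norm_nonneg _) c.2 (Nat.cast_pos.mpr hk1)).mp hk
  simpa [abs_of_nonneg] using this.le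

section MatrixAnalysis

open NormedSpace Nat

attribute [local instance] Matrix.linftyOpNormedAddCommGroup Matrix.linftyOpNormedRing
  Matrix.linftyOpNormedAlgebra

variable {ι : Type*} [Fintype ι] [DecidableEq ι]

theorem Matrix.summable_pow_of_norm_spectrum_lt_one [Nonempty ι] {Q : Matrix ι ι ℝ}
    (hQ : ∀ z ∈ spectrum ℂ (Q.map Complex.ofReal), ‖z‖ < 1) : Summable (Q ^ ·) := by
  have hρ : spectralRadius ℂ (Q.map Complex.ofReal) < 1 := by
    simpa using spectrum.spectralRadius_lt_of_forall_lt _ (r := 1)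
      fun z hz => by simpa [← NNReal.coe_lt_coe] using hQ z hz
  have hsum : Summable fun k => Q.map Complex.ofReal ^ k :=
    (summable_norm_pow_of_spectralRadius_lt_one hρ).of_norm
  have hpow (k : ℕ) : Q.map Complex.ofReal ^ k = (Q ^ k).map Complex.ofReal :=
    (map_pow Complex.ofRealHom.mapMatrix Q k).symm
  refine Pi.summable.2 fun i => Pi.summable.2 fun j => ?_
  simpa [hpow] using Pi.summable.1 (Pi.summable.1 hsum i) j

theorem Matrix.hasSum_exp_apply (M : Matrix ι ι ℝ) (i j : ι) :
    HasSum (fun k => (k ! : ℝ)⁻¹ * (M ^ k) i j) (exp M i j) :=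
  Pi.hasSum.1 (Pi.hasSum.1 (exp_series_hasSum_exp' (𝕂 := ℝ) M) i) j

theorem Matrix.exp_apply_nonneg_s13 {M : Matrix ι ι ℝ} (hM : ∀ i j, 0 ≤ M i j) (i j : ι) :
    0 ≤ exp M i j :=
  hasSum_le (fun k => mul_nonneg (by positivity) (pow_apply_nonneg hM k i j)) hasSum_zero
    (M.hasSum_exp_apply i j)

theorem Matrix.le_exp_apply {M : Matrix ι ι ℝ} (hM : ∀ i j, 0 ≤ M i j) (i j : ι) :
    M i j ≤ exp M i j := by
  simpa using le_hasSum (M.hasSum_exp_apply i j) 1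
    fun k _ => mul_nonneg (by positivity) (pow_apply_nonneg hM k i j)

theorem Matrix.hasDerivAt_exp_smul_mulVec (B : Matrix ι ι ℝ) (x : ι → ℝ) (t : ℝ) :
    HasDerivAt (fun t : ℝ => exp (t • B) *ᵥ x) (B *ᵥ (exp (t • B) *ᵥ x)) t := by
  let L : Matrix ι ι ℝ →L[ℝ] ι → ℝ :=
    ((LinearMap.applyₗ x).comp Matrix.toLin'.toLinearMap).toContinuousLinearMap
  rw [mulVec_mulVec]
  exact L.hasFDerivAt.comp_hasDerivAt t (hasDerivAt_exp_smul_const' B t)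

theorem Matrix.eq_exp_smul_mulVec_of_hasDerivAt {B : Matrix ι ι ℝ} {f : ℝ → ι → ℝ}
    (hf : ∀ t, HasDerivAt f (B *ᵥ f t) t) (t : ℝ) : f t = exp (t • B) *ᵥ f 0 := by
  let L : (ι → ℝ) →L[ℝ] ι → ℝ := LinearMap.toContinuousLinearMap (Matrix.toLin' B)
  have := ODE_solution_unique_univ (v := fun _ => L) (s := fun _ => Set.univ) (t₀ := 0)
    (fun _ => L.lipschitz.lipschitzOnWith) (fun t => ⟨hf t, trivial⟩)
    (fun t => ⟨B.hasDerivAt_exp_smul_mulVec (f 0) t, trivial⟩) (by simp)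
  exact congrFun this t

theorem Matrix.exp_smul_mulVec_of_mulVec_eq_smul {B : Matrix ι ι ℝ} {μ : ι → ℝ} {β : ℝ}
    (hμ : B *ᵥ μ = β • μ) (t : ℝ) : exp (t • B) *ᵥ μ = Real.exp (t * β) • μ := by
  have hf (t : ℝ) :
      HasDerivAt (fun t => Real.exp (t * β) • μ) (B *ᵥ (Real.exp (t * β) • μ)) t := by
    rw [mulVec_smul, hμ, smul_smul]
    exact ((hasDerivAt_mul_const β).exp).smul_const μ
  simpa using (eq_exp_smul_mulVec_of_hasDerivAt hf t).symm

end MatrixAnalysis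

theorem Matrix.inv_one_sub_apply_pos {ι : Type*} [Fintype ι] [DecidableEq ι] {Q : Matrix ι ι ℝ}
    (hQ : Summable (Q ^ ·)) (hQ0 : ∀ i j, 0 ≤ Q i j) (hirr : ∀ i j, ∃ k : ℕ, 0 < (Q ^ k) i j)
    (i j : ι) : 0 < (1 - Q)⁻¹ i j := by
  obtain ⟨k, hk⟩ := hirr i j
  rw [Matrix.inv_eq_left_inv hQ.tsum_pow_mul_one_sub]
  have hsum : HasSum (fun m => (Q ^ m) i j) ((∑' m, Q ^ m) i j) :=
    Pi.hasSum.1 (Pi.hasSum.1 hQ.hasSum i) j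
  exact hk.trans_le (le_hasSum hsum k fun m _ => pow_apply_nonneg hQ0 m i j)

section Normalize

variable {ι : Type*} [Fintype ι]

noncomputable def normalizeSum (v : ι → ℝ) : ι → ℝ := (∑ i, v i)⁻¹ • v

theorem normalizeSum_smul {a : ℝ} (ha : a ≠ 0) (v : ι → ℝ) :
    normalizeSum (a • v) = normalizeSum v := by
  simp only [normalizeSum, Pi.smul_apply, smul_eq_mul, ← Finset.mul_sum, smul_smul]
  rw [mul_inv, mul_right_comm, inv_mul_cancel₀ ha, one_mul]

end Normalize

open NormedSpace in
theorem Matrix.eq_normalizeSum_exp_smul_mulVec_of_hasDerivAt {ι : Type*} [Fintype ι] [DecidableEq ι]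
    {B : Matrix ι ι ℝ} {ν : ℝ → ι → ℝ}
    (hν : ∀ t, HasDerivAt ν (B *ᵥ ν t - (∑ i, (B *ᵥ ν t) i) • ν t) t) (hν0 : ∑ i, ν 0 i = 1)
    (t : ℝ) : ν t = normalizeSum (exp (t • B) *ᵥ ν 0) := by
  set r : ℝ → ℝ := fun t => ∑ i, (B *ᵥ ν t) i
  have hνc : Continuous ν := continuous_iff_continuousAt.2 fun t => (hν t).continuousAt
  have hr : Continuous r := by fun_prop
  set R : ℝ → ℝ := fun t => ∫ s in (0 : ℝ)..t, r s
  have hR (t : ℝ) : HasDerivAt R (r t) t := (hr.integral_hasStrictDerivAt 0 t).hasDerivAt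
  set w : ℝ → ι → ℝ := fun t => Real.exp (R t) • ν t
  have hw (t : ℝ) : HasDerivAt w (B *ᵥ w t) t := by
    refine ((hR t).exp.smul (hν t)).congr_deriv ?_
    simp only [w, mulVec_smul]
    module
  have hw0 : w 0 = ν 0 := by simp [w, R]
  have hw_sum (t : ℝ) : ∑ i, w t i = Real.exp (R t) := by
    have hderiv (t : ℝ) : HasDerivAt (fun t => ∑ i, w t i - Real.exp (R t)) 0 t := by
      refine ((HasDerivAt.fun_sum fun i _ => hasDerivAt_pi.1 (hw t) i).sub
        (hR t).exp).congr_deriv ?_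
      simp [w, mulVec_smul, ← Finset.mul_sum, r]
    have := is_const_of_deriv_eq_zero (fun t => (hderiv t).differentiableAt)
      (fun t => (hderiv t).deriv) t 0
    simpa [hw0, R, hν0, sub_eq_zero] using this
  rw [← hw0, ← eq_exp_smul_mulVec_of_hasDerivAt hw, normalizeSum, hw_sum]
  simp [w, smul_smul]

section Oscillation

variable {ι : Type*} [Fintype ι] {μ : ι → ℝ} {P : Matrix ι ι ℝ} {c : ℝ}

theorem smul_add_le_mulVec (hP : ∀ i j, 0 ≤ P i j) (hPμ : P *ᵥ μ = μ)
    (hc : ∀ i j, c * μ i ≤ P i j * μ j) (hμ : ∀ i, 0 < μ i) {x : ι → ℝ} {m : ℝ}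
    (hm : m • μ ≤ x) (j : ι) : (m + c * (x j / μ j - m)) • μ ≤ P *ᵥ x := by
  intro i
  have hgap : 0 ≤ x j / μ j - m := by
    rw [sub_nonneg, le_div_iff₀ (hμ j)]
    exact hm j
  have hsplit : (P *ᵥ x) i = m * μ i + (P *ᵥ (x - m • μ)) i := by
    rw [mulVec_sub, mulVec_smul, hPμ]
    simp
  have hdrop : P i j * (x j - m * μ j) ≤ (P *ᵥ (x - m • μ)) i :=
    Finset.single_le_sum (f := fun k => P i k * (x - m • μ) k)
      (fun k _ => mul_nonneg (hP i k) (by simpa using hm k)) (Finset.mem_univ j)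
  have hmain : c * μ i * (x j / μ j - m) ≤ P i j * (x j - m * μ j) :=
    calc c * μ i * (x j / μ j - m) ≤ P i j * μ j * (x j / μ j - m) :=
          mul_le_mul_of_nonneg_right (hc i j) hgap
      _ = P i j * (x j - m * μ j) := by field_simp [(hμ j).ne']
  simp only [Pi.smul_apply, smul_eq_mul]
  linarith

variable [Nonempty ι]

noncomputable def ratioMin (μ x : ι → ℝ) : ℝ :=
  Finset.univ.inf' Finset.univ_nonempty fun i => x i / μ i

noncomputable def ratioMax (μ x : ι → ℝ) : ℝ :=
  Finset.univ.sup' Finset.univ_nonempty fun i => x i / μ i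

theorem le_ratioMin_iff (hμ : ∀ i, 0 < μ i) {x : ι → ℝ} {m : ℝ} :
    m ≤ ratioMin μ x ↔ m • μ ≤ x := by
  simp [ratioMin, Pi.le_def, le_div_iff₀ (hμ _)]

theorem ratioMax_le_iff (hμ : ∀ i, 0 < μ i) {x : ι → ℝ} {M : ℝ} :
    ratioMax μ x ≤ M ↔ x ≤ M • μ := by
  simp [ratioMax, Pi.le_def, div_le_iff₀ (hμ _)]

theorem ratioMax_neg (hμ : ∀ i, 0 < μ i) (x : ι → ℝ) : ratioMax μ (-x) = -ratioMin μ x := by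
  refine eq_of_forall_ge_iff fun M => ?_
  rw [ratioMax_le_iff hμ, neg_le (a := ratioMin μ x), le_ratioMin_iff hμ, neg_smul, neg_le]

theorem ratioMin_neg (hμ : ∀ i, 0 < μ i) (x : ι → ℝ) : ratioMin μ (-x) = -ratioMax μ x := by
  rw [← neg_neg x, ratioMax_neg hμ, neg_neg, neg_neg]

theorem exists_div_eq_ratioMax (x : ι → ℝ) : ∃ j, x j / μ j = ratioMax μ x := by
  obtain ⟨j, -, hj⟩ := Finset.exists_mem_eq_sup' Finset.univ_nonempty fun i => x i / μ i
  exact ⟨j, hj.symm⟩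

theorem ratioMin_le_ratioMax (x : ι → ℝ) : ratioMin μ x ≤ ratioMax μ x := by
  obtain ⟨j⟩ := ‹Nonempty ι›
  exact (Finset.inf'_le _ (Finset.mem_univ j)).trans
    (Finset.le_sup' (fun i => x i / μ i) (Finset.mem_univ j))

theorem exists_pos_mul_le_mul (hP : ∀ i j, 0 < P i j) (hμ : ∀ i, 0 < μ i) :
    ∃ c > 0, ∀ i j, c * μ i ≤ P i j * μ j := by
  obtain ⟨p, hp⟩ := Finite.exists_min fun p : ι × ι => P p.1 p.2 * μ p.2 / μ p.1
  exact ⟨_, div_pos (mul_pos (hP _ _) (hμ _)) (hμ _),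
    fun i j => (le_div_iff₀ (hμ i)).1 (hp (i, j))⟩

theorem ratioMin_mulVec_pos (hP : ∀ i j, 0 < P i j) (hμ : ∀ i, 0 < μ i) {x : ι → ℝ}
    (hx : 0 ≤ x) (hx0 : x ≠ 0) : 0 < ratioMin μ (P *ᵥ x) := by
  obtain ⟨j, hj⟩ := Function.ne_iff.1 hx0
  simp only [ratioMin, Finset.lt_inf'_iff, Finset.mem_univ, forall_const]
  refine fun i => div_pos (Finset.sum_pos' (fun k _ => mul_nonneg (hP i k).le (hx k))
    ⟨j, Finset.mem_univ _, ?_⟩) (hμ i)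
  exact mul_pos (hP i j) (lt_of_le_of_ne (hx j) (Ne.symm hj))

theorem ratioMin_add_le_ratioMin_mulVec (hP : ∀ i j, 0 ≤ P i j) (hPμ : P *ᵥ μ = μ)
    (hc : ∀ i j, c * μ i ≤ P i j * μ j) (hμ : ∀ i, 0 < μ i) (x : ι → ℝ) :
    ratioMin μ x + c * (ratioMax μ x - ratioMin μ x) ≤ ratioMin μ (P *ᵥ x) := by
  obtain ⟨j, hj⟩ := exists_div_eq_ratioMax (μ := μ) x
  rw [le_ratioMin_iff hμ, ← hj]
  exact smul_add_le_mulVec hP hPμ hc hμ ((le_ratioMin_iff hμ).1 le_rfl) j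

theorem ratioMin_le_ratioMin_mulVec (hP : ∀ i j, 0 ≤ P i j) (hPμ : P *ᵥ μ = μ)
    (hμ : ∀ i, 0 < μ i) (x : ι → ℝ) : ratioMin μ x ≤ ratioMin μ (P *ᵥ x) := by
  simpa using ratioMin_add_le_ratioMin_mulVec hP hPμ (c := 0)
    (fun i j => by simpa using mul_nonneg (hP i j) (hμ j).le) hμ x

theorem ratioMax_mulVec_le_ratioMax (hP : ∀ i j, 0 ≤ P i j) (hPμ : P *ᵥ μ = μ)
    (hμ : ∀ i, 0 < μ i) (x : ι → ℝ) : ratioMax μ (P *ᵥ x) ≤ ratioMax μ x := by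
  simpa [mulVec_neg, ratioMin_neg hμ] using ratioMin_le_ratioMin_mulVec hP hPμ hμ (-x)

theorem ratioMax_sub_ratioMin_mulVec_le (hP : ∀ i j, 0 ≤ P i j) (hPμ : P *ᵥ μ = μ)
    (hc : ∀ i j, c * μ i ≤ P i j * μ j) (hμ : ∀ i, 0 < μ i) (x : ι → ℝ) :
    ratioMax μ (P *ᵥ x) - ratioMin μ (P *ᵥ x) ≤
      (1 - 2 * c) * (ratioMax μ x - ratioMin μ x) := by
  have hlo := ratioMin_add_le_ratioMin_mulVec hP hPμ hc hμ x
  have hhi := ratioMin_add_le_ratioMin_mulVec hP hPμ hc hμ (-x)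
  rw [mulVec_neg, ratioMin_neg hμ, ratioMax_neg hμ, ratioMin_neg hμ] at hhi
  linarith

end Oscillation

theorem tendsto_zero_of_antitone_of_le_mul {d : ℝ → ℝ} {q : ℝ} (hd : Antitone d)
    (hd0 : ∀ t, 0 ≤ d t) (hq : q < 1) (hstep : ∀ t, d (t + 1) ≤ q * d t) :
    Tendsto d atTop (𝓝 0) := by
  have hlim : Tendsto d atTop (𝓝 (⨅ t, d t)) :=
    tendsto_atTop_ciInf hd ⟨0, by rintro _ ⟨t, rfl⟩; exact hd0 t⟩
  have hshift : Tendsto (fun t => d (t + 1)) atTop (𝓝 (⨅ t, d t)) :=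
    hlim.comp (tendsto_atTop_add_const_right _ 1 tendsto_id)
  have hle : ⨅ t, d t ≤ q * ⨅ t, d t :=
    le_of_tendsto_of_tendsto' hshift (hlim.const_mul q) hstep
  have hnonneg : 0 ≤ ⨅ t, d t := le_ciInf hd0
  have : ⨅ t, d t = 0 := by nlinarith
  rwa [this] at hlim

theorem exists_tendsto_of_monotone_of_antitone {lo hi : ℝ → ℝ} (hlo : Monotone lo)
    (hhi : Antitone hi) (hle : ∀ t, lo t ≤ hi t) (hgap : Tendsto (hi - lo) atTop (𝓝 0)) :
    ∃ L, Tendsto lo atTop (𝓝 L) ∧ Tendsto hi atTop (𝓝 L) := by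
  have hbdd : BddAbove (Set.range lo) := by
    refine ⟨hi 0, ?_⟩
    rintro _ ⟨t, rfl⟩
    exact (hlo (le_max_left t 0)).trans ((hle _).trans (hhi (le_max_right t 0)))
  have hlim := tendsto_atTop_ciSup hlo hbdd
  exact ⟨_, hlim, by simpa using hlim.add hgap⟩

theorem exists_tendsto_smul_of_mulVec_semigroup {ι : Type*} [Fintype ι] [Nonempty ι]
    {T : ℝ → Matrix ι ι ℝ} {μ : ι → ℝ} {c : ℝ}
    (hμ : ∀ i, 0 < μ i) (hTμ : ∀ s, T s *ᵥ μ = μ) (hT : ∀ s, 0 ≤ s → ∀ i j, 0 ≤ T s i j)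
    (hc : 0 < c) (hT1 : ∀ i j, c * μ i ≤ T 1 i j * μ j) {z : ℝ → ι → ℝ}
    (hz : ∀ t s, 0 ≤ s → z (t + s) = T s *ᵥ z t) :
    ∃ L, (∀ t, ratioMin μ (z t) ≤ L) ∧ Tendsto z atTop (𝓝 (L • μ)) := by
  set lo := fun t => ratioMin μ (z t)
  set hi := fun t => ratioMax μ (z t)
  have hlo : Monotone lo := fun a b hab => by
    have := ratioMin_le_ratioMin_mulVec (hT _ (sub_nonneg.2 hab)) (hTμ _) hμ (z a)
    rwa [← hz a _ (sub_nonneg.2 hab), add_sub_cancel] at this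
  have hhi : Antitone hi := fun a b hab => by
    have := ratioMax_mulVec_le_ratioMax (hT _ (sub_nonneg.2 hab)) (hTμ _) hμ (z a)
    rwa [← hz a _ (sub_nonneg.2 hab), add_sub_cancel] at this
  have hgap : Tendsto (hi - lo) atTop (𝓝 0) := by
    refine tendsto_zero_of_antitone_of_le_mul (q := 1 - 2 * c)
      (fun a b hab => sub_le_sub (hhi hab) (hlo hab))
      (fun t => sub_nonneg.2 (ratioMin_le_ratioMax _)) (by linarith) fun t => ?_
    simpa only [Pi.sub_apply, hi, lo, hz t 1 zero_le_one] using
      ratioMax_sub_ratioMin_mulVec_le (hT 1 zero_le_one) (hTμ 1) hT1 hμ (z t)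
  obtain ⟨L, hloL, hhiL⟩ :=
    exists_tendsto_of_monotone_of_antitone hlo hhi (fun t => ratioMin_le_ratioMax _) hgap
  refine ⟨L, fun t => hlo.ge_of_tendsto hloL t, tendsto_pi_nhds.2 fun i => ?_⟩
  exact tendsto_of_tendsto_of_tendsto_of_le_of_le (hloL.mul_const (μ i)) (hhiL.mul_const (μ i))
    (fun t => (le_ratioMin_iff hμ).1 le_rfl i) (fun t => (ratioMax_le_iff hμ).1 le_rfl i)

open NormedSpace in
theorem Matrix.tendsto_normalizeSum_exp_smul_mulVec {ι : Type*} [Fintype ι] [DecidableEq ι]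
    {B : Matrix ι ι ℝ} (hB : ∀ i j, 0 < B i j) {μ : ι → ℝ} (hμ : ∀ i, 0 < μ i)
    (hμ1 : ∑ i, μ i = 1) {β : ℝ} (hBμ : B *ᵥ μ = β • μ) {x : ι → ℝ} (hx : 0 ≤ x) (hx0 : x ≠ 0) :
    Tendsto (fun t : ℝ => normalizeSum (exp (t • B) *ᵥ x)) atTop (𝓝 μ) := by
  obtain ⟨j₀, -⟩ := Function.ne_iff.1 hx0
  have : Nonempty ι := ⟨j₀⟩
  set T : ℝ → Matrix ι ι ℝ := fun s => Real.exp (-(s * β)) • exp (s • B)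
  have hTμ (s : ℝ) : T s *ᵥ μ = μ := by
    simp [T, smul_mulVec, exp_smul_mulVec_of_mulVec_eq_smul hBμ, smul_smul, ← Real.exp_add]
  have hT (s : ℝ) (hs : 0 ≤ s) (i j : ι) : 0 ≤ T s i j :=
    mul_nonneg (Real.exp_pos _).le (exp_apply_nonneg_s13 (fun i j => mul_nonneg hs (hB i j).le) i j)
  have hT1 (i j : ι) : 0 < T 1 i j := by
    have := le_exp_apply (M := (1 : ℝ) • B) (fun i j => by simpa using (hB i j).le) i j
    exact mul_pos (Real.exp_pos _) ((hB i j).trans_le (by simpa using this))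
  obtain ⟨c, hc, hcT⟩ := exists_pos_mul_le_mul hT1 hμ
  set z : ℝ → ι → ℝ := fun t => T t *ᵥ x
  have hz (t s : ℝ) (_ : 0 ≤ s) : z (t + s) = T s *ᵥ z t := by
    have hexp : exp ((t + s) • B) = exp (s • B) * exp (t • B) := by
      rw [add_comm, add_smul]
      exact exp_add_of_commute _ _ (((Commute.refl B).smul_left s).smul_right t)
    simp only [z, T, mulVec_mulVec, smul_mul_smul_comm, ← Real.exp_add, hexp]
    ring_nf
  obtain ⟨L, hL, hzL⟩ := exists_tendsto_smul_of_mulVec_semigroup hμ hTμ hT hc hcT hz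
  have hLpos : 0 < L := (ratioMin_mulVec_pos hT1 hμ hx hx0).trans_le (hL 1)
  have hsum : Tendsto (fun t => ∑ i, z t i) atTop (𝓝 L) := by
    simpa [← Finset.mul_sum, hμ1] using
      tendsto_finsetSum Finset.univ fun i _ => tendsto_pi_nhds.1 hzL i
  have hnorm (t : ℝ) : normalizeSum (exp (t • B) *ᵥ x) = normalizeSum (z t) := by
    simp only [z, T, smul_mulVec, normalizeSum_smul (Real.exp_pos _).ne']
  refine (tendsto_congr hnorm).2 ?_
  simpa [normalizeSum, smul_smul, hLpos.ne'] using (hsum.inv₀ hLpos.ne').smul hzL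

theorem ode_converges_to_qsd_general {n : ℕ} (Q : Matrix (Fin n) (Fin n) ℝ)
    (hQnonneg : ∀ i j, 0 ≤ Q i j) (hirr : MatIrreducible Q)
    (hspec : ∀ z ∈ spectrum ℂ (Q.map (Complex.ofReal)), ‖z‖ < 1)
    (A : Matrix (Fin n) (Fin n) ℝ) (hA : A = (1 - Q)⁻¹)
    (β : ℝ)
    (μbar : Fin n → ℝ) (hμpos : ∀ i, 0 < μbar i) (hμsum : (∑ i, μbar i) = 1)
    (hμeig : Matrix.vecMul μbar A = β • μbar)
    (ν : ℝ → Fin n → ℝ)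
    (hode : ∀ t : ℝ, HasDerivAt ν
      ((Aᵀ).mulVec (ν t) - ((ν t) ⬝ᵥ A.mulVec (fun _ => 1)) • (ν t)) t)
    (h0nonneg : ∀ i, 0 ≤ ν 0 i) (h0sum : (∑ i, ν 0 i) = 1) :
    Tendsto ν atTop (nhds μbar) := by
  have : Nonempty (Fin n) :=
    Finset.univ_nonempty_iff.1 (Finset.nonempty_of_sum_ne_zero (hμsum ▸ one_ne_zero))
  have hApos : ∀ i j, 0 < A i j :=
    hA ▸ inv_one_sub_apply_pos (summable_pow_of_norm_spectrum_lt_one hspec) hQnonneg hirr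
  have hmass (v : Fin n → ℝ) : ∑ i, (Aᵀ *ᵥ v) i = v ⬝ᵥ A *ᵥ fun _ => 1 := by
    rw [← dotProduct_one, mulVec_transpose, ← dotProduct_mulVec]
    rfl
  have hν (t : ℝ) := eq_normalizeSum_exp_smul_mulVec_of_hasDerivAt (B := Aᵀ)
    (fun t => by simpa only [hmass] using hode t) h0sum t
  refine (tendsto_congr hν).2 (tendsto_normalizeSum_exp_smul_mulVec (B := Aᵀ)
    (fun i j => hApos j i) hμpos hμsum (by rw [mulVec_transpose, hμeig]) h0nonneg fun h => ?_)
  simp [h] at h0sum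

/-- for `A = (I-Q)⁻¹` with `Q` irreducible substochastic, any
solution of `ν̇ᵀ = νᵀA - (νᵀA𝟙)νᵀ` starting in the probability simplex converges
to the quasi-stationary distribution `μ̄` as `t → ∞`. -/
theorem ode_converges_to_qsd {n : ℕ} (Q : Matrix (Fin n) (Fin n) ℝ)
    (hQnonneg : ∀ i j, 0 ≤ Q i j) (hirr : MatIrreducible Q)
    (hspec : ∀ z ∈ spectrum ℂ (Q.map (Complex.ofReal)), ‖z‖ < 1)
    (A : Matrix (Fin n) (Fin n) ℝ) (hA : A = (1 - Q)⁻¹)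
    (β : ℝ) (hβpos : 0 < β) (hβmem : β ∈ spectrum ℝ A)
    (hβmax : ∀ z ∈ spectrum ℂ (A.map (Complex.ofReal)), ‖z‖ ≤ β)
    (μbar : Fin n → ℝ) (hμpos : ∀ i, 0 < μbar i) (hμsum : (∑ i, μbar i) = 1)
    (hμeig : Matrix.vecMul μbar A = β • μbar)
    (ν : ℝ → Fin n → ℝ)
    (hode : ∀ t : ℝ, HasDerivAt ν
      ((Aᵀ).mulVec (ν t) - ((ν t) ⬝ᵥ A.mulVec (fun _ => 1)) • (ν t)) t)
    (h0nonneg : ∀ i, 0 ≤ ν 0 i) (h0sum : (∑ i, ν 0 i) = 1) :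
    Tendsto ν atTop (nhds μbar) :=
  ode_converges_to_qsd_general Q hQnonneg hirr hspec A hA β μbar hμpos hμsum hμeig ν hode h0nonneg
    h0sum
end

section
/- Let A be an n×n matrix with strictly positive entries and Perron eigenvalue β, and let v be a probability vector. Then vᵀ exp((A - βI)t) converges as t → ∞ to a nonzero nonnegative multiple of the left Perron eigenvector of A. -/
/-!
The matrices `P t = exp (t • (A - β • 1))` form a semigroup of nonnegative matrices fixing the
left eigenvector `μbar`, and `P 1` has strictly positive entries. For `x t = v ᵥ* P t`, the
extreme ratios `min_i x t i / μbar i` and `max_i x t i / μbar i` are therefore monotone in `t`,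
and each unit of time shrinks their gap by a fixed factor `1 - κ < 1` (a Doeblin-type
contraction). Both ratios thus converge to a common limit `c`, which squeezes `x t` to
`c • μbar`; and `c` is positive because it dominates the minimal ratio of the strictly positive
vector `x 1`.
-/

open Matrix Filter
open NormedSpace Topology
open scoped Nat

namespace Matrix

variable {ι : Type*} [Fintype ι] [DecidableEq ι]

theorem hasSum_exp_apply_s14 (M : Matrix ι ι ℝ) (i j : ι) :
    HasSum (fun k : ℕ => (k ! : ℝ)⁻¹ * (M ^ k) i j) (exp M i j) := by
  let : NormedRing (Matrix ι ι ℝ) := Matrix.linftyOpNormedRing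
  let : NormedAlgebra ℝ (Matrix ι ι ℝ) := Matrix.linftyOpNormedAlgebra
  exact Pi.hasSum.mp (Pi.hasSum.mp (exp_series_hasSum_exp' (𝕂 := ℝ) M) i) j

theorem le_exp_apply_of_nonneg {M : Matrix ι ι ℝ} (hM : ∀ i j, 0 ≤ M i j) (i j : ι) :
    M i j ≤ exp M i j := by
  simpa using le_hasSum (hasSum_exp_apply_s14 M i j) 1
    fun k _ => mul_nonneg (by positivity) (pow_apply_nonneg hM k i j)

theorem vecMul_exp_of_vecMul_eq_zero {μ : ι → ℝ} {M : Matrix ι ι ℝ} (h : μ ᵥ* M = 0) :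
    μ ᵥ* exp M = μ := by
  ext j
  have hsum : HasSum (fun k : ℕ => (k ! : ℝ)⁻¹ * (μ ᵥ* M ^ k) j) ((μ ᵥ* exp M) j) := by
    simp only [vecMul, dotProduct, Finset.mul_sum, mul_left_comm _ (μ _)]
    exact hasSum_sum fun i _ => (hasSum_exp_apply_s14 M i j).mul_left (μ i)
  have hsingle := hasSum_single (f := fun k : ℕ => (k ! : ℝ)⁻¹ * (μ ᵥ* M ^ k) j) 0
    fun k hk => by
      obtain ⟨l, rfl⟩ := Nat.exists_eq_succ_of_ne_zero hk
      rw [pow_succ', ← vecMul_vecMul, h, zero_vecMul, Pi.zero_apply, mul_zero]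
  simpa using hsum.unique hsingle

theorem exp_smul_sub_smul_one (M : Matrix ι ι ℝ) (t c : ℝ) :
    exp (t • (M - c • 1)) = Real.exp (-(t * c)) • exp (t • M) := by
  let : NormedRing (Matrix ι ι ℝ) := Matrix.linftyOpNormedRing
  let : NormedAlgebra ℝ (Matrix ι ι ℝ) := Matrix.linftyOpNormedAlgebra
  have hsplit : t • (M - c • 1) = algebraMap ℝ _ (-(t * c)) + t • M := by
    rw [Algebra.algebraMap_eq_smul_one, smul_sub, smul_smul, neg_smul]; abel
  rw [hsplit, exp_add_of_commute _ _ (Algebra.commute_algebraMap_left _ _)]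
  erw [← algebraMap_exp_comm]
  rw [← Algebra.smul_def, Real.exp_eq_exp_ℝ]

theorem mul_le_exp_smul_sub_smul_one_apply {M : Matrix ι ι ℝ} (hM : ∀ i j, 0 ≤ M i j)
    (c : ℝ) {t : ℝ} (ht : 0 ≤ t) (i j : ι) :
    Real.exp (-(t * c)) * (t * M i j) ≤ exp (t • (M - c • 1)) i j := by
  rw [exp_smul_sub_smul_one, smul_apply, smul_eq_mul]
  exact mul_le_mul_of_nonneg_left
    (le_exp_apply_of_nonneg (fun i j => mul_nonneg ht (hM i j)) i j) (Real.exp_pos _).le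

end Matrix

section Ratio

variable {ι : Type*} {μ : ι → ℝ}

noncomputable def minRatio (μ x : ι → ℝ) : ℝ := ⨅ i, x i / μ i

noncomputable def maxRatio (μ x : ι → ℝ) : ℝ := ⨆ i, x i / μ i

theorem le_minRatio [Nonempty ι] (hμ : ∀ i, 0 < μ i) {a : ℝ} {x : ι → ℝ}
    (h : a • μ ≤ x) : a ≤ minRatio μ x :=
  le_ciInf fun i => (le_div_iff₀ (hμ i)).mpr (h i)

theorem maxRatio_le [Nonempty ι] (hμ : ∀ i, 0 < μ i) {a : ℝ} {x : ι → ℝ}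
    (h : x ≤ a • μ) : maxRatio μ x ≤ a :=
  ciSup_le fun i => (div_le_iff₀ (hμ i)).mpr (h i)

variable [Finite ι]

theorem minRatio_smul_le (hμ : ∀ i, 0 < μ i) (x : ι → ℝ) : minRatio μ x • μ ≤ x :=
  fun i => (le_div_iff₀ (hμ i)).mp (ciInf_le (Finite.bddBelow_range fun i => x i / μ i) i)

theorem le_maxRatio_smul (hμ : ∀ i, 0 < μ i) (x : ι → ℝ) : x ≤ maxRatio μ x • μ :=
  fun i => (div_le_iff₀ (hμ i)).mp (le_ciSup (Finite.bddAbove_range fun i => x i / μ i) i)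

variable [Nonempty ι]

theorem minRatio_le_maxRatio (x : ι → ℝ) : minRatio μ x ≤ maxRatio μ x :=
  (ciInf_le (Finite.bddBelow_range fun i => x i / μ i) (Classical.arbitrary ι)).trans
    (le_ciSup (Finite.bddAbove_range fun i => x i / μ i) _)

theorem minRatio_pos (hμ : ∀ i, 0 < μ i) {x : ι → ℝ} (hx : ∀ i, 0 < x i) :
    0 < minRatio μ x := by
  obtain ⟨i, hi⟩ := exists_eq_ciInf_of_finite (f := fun i => x i / μ i)
  rw [minRatio, ← hi]
  exact div_pos (hx i) (hμ i)

end Ratio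

section NonnegMatrix

variable {ι : Type*} [Fintype ι] {P : Matrix ι ι ℝ}

theorem vecMul_mono_of_nonneg (hP : ∀ i j, 0 ≤ P i j) {x y : ι → ℝ} (h : x ≤ y) :
    x ᵥ* P ≤ y ᵥ* P := fun j =>
  Finset.sum_le_sum fun i _ => mul_le_mul_of_nonneg_right (h i) (hP i j)

theorem vecMul_pos_of_pos (hP : ∀ i j, 0 < P i j) {v : ι → ℝ} (hv : 0 ≤ v) {i : ι}
    (hi : 0 < v i) (j : ι) : 0 < (v ᵥ* P) j :=
  Finset.sum_pos' (fun k _ => mul_nonneg (hv k) (hP k j).le)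
    ⟨i, Finset.mem_univ i, mul_pos hi (hP i j)⟩

variable {μ : ι → ℝ} [Nonempty ι]

theorem minRatio_le_minRatio_vecMul (hμ : ∀ i, 0 < μ i) (hP : ∀ i j, 0 ≤ P i j)
    (hμP : μ ᵥ* P = μ) (x : ι → ℝ) : minRatio μ x ≤ minRatio μ (x ᵥ* P) := by
  refine le_minRatio hμ ?_
  rw [← hμP, ← smul_vecMul, hμP]
  exact vecMul_mono_of_nonneg hP (minRatio_smul_le hμ x)

theorem maxRatio_vecMul_le_maxRatio (hμ : ∀ i, 0 < μ i) (hP : ∀ i j, 0 ≤ P i j)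
    (hμP : μ ᵥ* P = μ) (x : ι → ℝ) : maxRatio μ (x ᵥ* P) ≤ maxRatio μ x := by
  refine maxRatio_le hμ ?_
  rw [← hμP, ← smul_vecMul, hμP]
  exact vecMul_mono_of_nonneg hP (le_maxRatio_smul hμ x)

theorem exists_pos_minRatio_vecMul_ge (hμ : ∀ i, 0 < μ i) (hP : ∀ i j, 0 < P i j)
    (hμP : μ ᵥ* P = μ) : ∃ κ > 0, ∀ x : ι → ℝ,
      minRatio μ x + κ * (maxRatio μ x - minRatio μ x) ≤ minRatio μ (x ᵥ* P) := by
  obtain ⟨p, hp⟩ :=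
    exists_eq_ciInf_of_finite (f := fun p : ι × ι => μ p.1 * P p.1 p.2 / μ p.2)
  set κ := ⨅ p : ι × ι, μ p.1 * P p.1 p.2 / μ p.2
  have hκ : ∀ i j, κ * μ j ≤ μ i * P i j := fun i j =>
    (le_div_iff₀ (hμ j)).mp (ciInf_le (Finite.bddBelow_range _) (i, j))
  refine ⟨κ, ?_, fun x => le_minRatio hμ fun j => ?_⟩
  · rw [← hp]
    exact div_pos (mul_pos (hμ _) (hP _ _)) (hμ _)
  set a := minRatio μ x
  set b := maxRatio μ x
  obtain ⟨i, hi⟩ := exists_eq_ciSup_of_finite (f := fun i => x i / μ i)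
  have hw : 0 ≤ x - a • μ := sub_nonneg.mpr (minRatio_smul_le hμ x)
  have hwi : (x - a • μ) i = (b - a) * μ i := by
    have : x i = b * μ i := (div_eq_iff (hμ i).ne').mp hi
    simp only [Pi.sub_apply, Pi.smul_apply, smul_eq_mul, this]; ring
  have hsplit : (x ᵥ* P) j = a * μ j + ((x - a • μ) ᵥ* P) j := by
    rw [sub_vecMul, smul_vecMul, hμP]; simp
  -- the excess over `a • μ` is `(b - a) * μ i` at a maximising coordinate `i`, and `P` carries at
  -- least a `κ`-fraction of it, in units of `μ`, to every coordinate `j`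
  have hexcess : (b - a) * (κ * μ j) ≤ ((x - a • μ) ᵥ* P) j :=
    calc (b - a) * (κ * μ j) ≤ (b - a) * (μ i * P i j) :=
          mul_le_mul_of_nonneg_left (hκ i j) (sub_nonneg.mpr (minRatio_le_maxRatio x))
      _ = (x - a • μ) i * P i j := by rw [hwi]; ring
      _ ≤ ((x - a • μ) ᵥ* P) j :=
          Finset.single_le_sum (f := fun k => (x - a • μ) k * P k j)
            (fun k _ => mul_nonneg (hw k) (hP k j).le) (Finset.mem_univ i)
  simp only [Pi.smul_apply, smul_eq_mul]
  nlinarith [hsplit, hexcess]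

end NonnegMatrix

theorem exists_tendsto_of_monotone_of_antitone_of_gap_le {f g : ℝ → ℝ} (hf : Monotone f)
    (hg : Antitone g) (hfg : ∀ t, f t ≤ g t) {q : ℝ} (hq : q < 1)
    (hgap : ∀ t, g (t + 1) - f (t + 1) ≤ q * (g t - f t)) :
    ∃ c, Tendsto f atTop (𝓝 c) ∧ Tendsto g atTop (𝓝 c) := by
  have hf_bdd : BddAbove (Set.range f) := ⟨g 0, by
    rintro _ ⟨t, rfl⟩
    rcases le_total t 0 with ht | ht
    · exact (hf ht).trans (hfg 0)
    · exact (hfg t).trans (hg ht)⟩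
  have hg_bdd : BddBelow (Set.range g) := ⟨f 0, by
    rintro _ ⟨t, rfl⟩
    rcases le_total t 0 with ht | ht
    · exact (hfg 0).trans (hg ht)
    · exact (hf ht).trans (hfg t)⟩
  have hf_lim := tendsto_atTop_ciSup hf hf_bdd
  have hg_lim := tendsto_atTop_ciInf hg hg_bdd
  set a := ⨆ t, f t
  set b := ⨅ t, g t
  have hab : a ≤ b := le_of_tendsto_of_tendsto' hf_lim hg_lim hfg
  have hshift : Tendsto (· + 1) atTop (atTop : Filter ℝ) :=
    tendsto_atTop_add_const_right _ 1 tendsto_id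
  have hba : b - a ≤ q * (b - a) :=
    le_of_tendsto_of_tendsto' ((hg_lim.comp hshift).sub (hf_lim.comp hshift))
      ((hg_lim.sub hf_lim).const_mul q) hgap
  have hba' : b = a := by nlinarith
  exact ⟨a, hf_lim, hba' ▸ hg_lim⟩

theorem tendsto_smul_of_minRatio_of_maxRatio {α ι : Type*} [Finite ι] {l : Filter α}
    {μ : ι → ℝ} (hμ : ∀ i, 0 < μ i) {x : α → ι → ℝ} {c : ℝ}
    (hmin : Tendsto (fun a => minRatio μ (x a)) l (𝓝 c))
    (hmax : Tendsto (fun a => maxRatio μ (x a)) l (𝓝 c)) :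
    Tendsto x l (𝓝 (c • μ)) :=
  tendsto_pi_nhds.mpr fun i =>
    tendsto_of_tendsto_of_tendsto_of_le_of_le (hmin.mul_const (μ i)) (hmax.mul_const (μ i))
      (fun a => minRatio_smul_le hμ (x a) i) (fun a => le_maxRatio_smul hμ (x a) i)

theorem exists_tendsto_vecMul_semigroup {ι : Type*} [Fintype ι] [Nonempty ι] {μ : ι → ℝ}
    (hμ : ∀ i, 0 < μ i) {P : ℝ → Matrix ι ι ℝ} (hadd : ∀ s t, P (s + t) = P s * P t)
    (hnonneg : ∀ t, 0 ≤ t → ∀ i j, 0 ≤ P t i j) (hinv : ∀ t, 0 ≤ t → μ ᵥ* P t = μ)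
    (hpos : ∀ i j, 0 < P 1 i j) (v : ι → ℝ) :
    ∃ c, (∀ t, minRatio μ (v ᵥ* P t) ≤ c) ∧
      Tendsto (fun t => v ᵥ* P t) atTop (𝓝 (c • μ)) := by
  set x := fun t => v ᵥ* P t
  have hstep : ∀ s t, x t = x s ᵥ* P (t - s) := fun s t => by
    simp only [x, vecMul_vecMul, ← hadd, add_sub_cancel]
  have hmin_mono : Monotone fun t => minRatio μ (x t) := fun s t hst => by
    beta_reduce
    rw [hstep s t]
    exact minRatio_le_minRatio_vecMul hμ (hnonneg _ (sub_nonneg.2 hst))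
      (hinv _ (sub_nonneg.2 hst)) _
  have hmax_anti : Antitone fun t => maxRatio μ (x t) := fun s t hst => by
    beta_reduce
    rw [hstep s t]
    exact maxRatio_vecMul_le_maxRatio hμ (hnonneg _ (sub_nonneg.2 hst))
      (hinv _ (sub_nonneg.2 hst)) _
  obtain ⟨κ, hκ, hcontract⟩ := exists_pos_minRatio_vecMul_ge hμ hpos (hinv 1 zero_le_one)
  have hgap : ∀ t, maxRatio μ (x (t + 1)) - minRatio μ (x (t + 1)) ≤
      (1 - κ) * (maxRatio μ (x t) - minRatio μ (x t)) := fun t => by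
    rw [hstep t (t + 1), add_sub_cancel_left]
    linarith [hcontract (x t),
      maxRatio_vecMul_le_maxRatio hμ (hnonneg 1 zero_le_one) (hinv 1 zero_le_one) (x t)]
  obtain ⟨c, hmin, hmax⟩ := exists_tendsto_of_monotone_of_antitone_of_gap_le hmin_mono
    hmax_anti (fun t => minRatio_le_maxRatio _) (by linarith) hgap
  exact ⟨c, hmin_mono.ge_of_tendsto hmin, tendsto_smul_of_minRatio_of_maxRatio hμ hmin hmax⟩

theorem semigroup_converges_to_perron_general {n : ℕ} (A : Matrix (Fin n) (Fin n) ℝ)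
    (hApos : ∀ i j, 0 < A i j)
    (β : ℝ)
    (μbar : Fin n → ℝ) (hμpos : ∀ i, 0 < μbar i)
    (hμeig : Matrix.vecMul μbar A = β • μbar)
    (v : Fin n → ℝ) (hvnonneg : ∀ i, 0 ≤ v i) (hvsum : (∑ i, v i) = 1) :
    ∃ c : ℝ, 0 < c ∧
      Tendsto (fun t : ℝ => Matrix.vecMul v
          (NormedSpace.exp (t • (A - β • (1 : Matrix (Fin n) (Fin n) ℝ)))))
        atTop (nhds (c • μbar)) := by
  obtain ⟨i, -, hvi⟩ := Finset.exists_ne_zero_of_sum_ne_zero (hvsum ▸ one_ne_zero)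
  have : Nonempty (Fin n) := ⟨i⟩
  set B := A - β • (1 : Matrix (Fin n) (Fin n) ℝ)
  have hμB : μbar ᵥ* B = 0 := by
    rw [vecMul_sub, hμeig, vecMul_smul, vecMul_one, sub_self]
  have hadd : ∀ s t : ℝ, exp ((s + t) • B) = exp (s • B) * exp (t • B) := fun s t => by
    rw [add_smul, Matrix.exp_add_of_commute _ _ (((Commute.refl B).smul_left s).smul_right t)]
  have hnonneg : ∀ t : ℝ, 0 ≤ t → ∀ i j, 0 ≤ exp (t • B) i j := fun t ht i j =>
    (by have := (hApos i j).le; positivity : (0 : ℝ) ≤ _).trans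
      (mul_le_exp_smul_sub_smul_one_apply (fun i j => (hApos i j).le) β ht i j)
  have hpos : ∀ i j, 0 < exp ((1 : ℝ) • B) i j := fun i j =>
    (by have := hApos i j; positivity : (0 : ℝ) < _).trans_le
      (mul_le_exp_smul_sub_smul_one_apply (fun i j => (hApos i j).le) β zero_le_one i j)
  have hinv : ∀ t : ℝ, μbar ᵥ* exp (t • B) = μbar := fun t =>
    vecMul_exp_of_vecMul_eq_zero (by rw [vecMul_smul, hμB, smul_zero])
  obtain ⟨c, hc, hlim⟩ :=
    exists_tendsto_vecMul_semigroup hμpos hadd hnonneg (fun t _ => hinv t) hpos v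
  have hx1 := vecMul_pos_of_pos hpos hvnonneg ((hvnonneg i).lt_of_ne' hvi)
  exact ⟨c, (minRatio_pos hμpos hx1).trans_le (hc 1), hlim⟩

/-- for a strictly positive matrix `A` with Perron eigenvalue `β`
and a probability vector `v`, `vᵀ exp((A - βI)t)` converges to a strictly
positive multiple of the left Perron eigenvector of `A`. -/
theorem semigroup_converges_to_perron {n : ℕ} (A : Matrix (Fin n) (Fin n) ℝ)
    (hApos : ∀ i j, 0 < A i j)
    (β : ℝ) (hβpos : 0 < β) (hβmem : β ∈ spectrum ℝ A)
    (hβmax : ∀ z ∈ spectrum ℂ (A.map (Complex.ofReal)), ‖z‖ ≤ β)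
    (μbar : Fin n → ℝ) (hμpos : ∀ i, 0 < μbar i) (hμsum : (∑ i, μbar i) = 1)
    (hμeig : Matrix.vecMul μbar A = β • μbar)
    (v : Fin n → ℝ) (hvnonneg : ∀ i, 0 ≤ v i) (hvsum : (∑ i, v i) = 1) :
    ∃ c : ℝ, 0 < c ∧
      Tendsto (fun t : ℝ => Matrix.vecMul v
          (NormedSpace.exp (t • (A - β • (1 : Matrix (Fin n) (Fin n) ℝ)))))
        atTop (nhds (c • μbar)) :=
  semigroup_converges_to_perron_general A hApos β μbar hμpos hμeig v hvnonneg hvsum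
end
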